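/- arXiv:1009.3669 — 5 statements merged into one kernel-verified Lean document; each statement's English description precedes it below -/
import Mathlib

section
/- For every real ν > 2, the inequality ν · Γ((ν−1)/2)² / (2 Γ(ν/2)²) ≤ ν/(ν−2) holds; that is, the covariance multiplier of the alternative multivariate t-distribution is no larger than that of the classical multivariate t-distribution with the same degrees of freedom. -/
open Real Set

lemma gamma_sq_le_mul {x y : ℝ} (hx : 0 < x) (hy : 0 < y) :
    Gamma ((x + y) / 2) ^ 2 ≤ Gamma x * Gamma y := by
  have h := Real.convexOn_log_Gamma.2 (mem_Ioi.mpr hx) (mem_Ioi.mpr hy)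
    (by norm_num : (0:ℝ) ≤ 1/2) (by norm_num : (0:ℝ) ≤ 1/2) (by norm_num)
  simp only [Function.comp_apply, smul_eq_mul] at h
  have hmid : (1/2 : ℝ) * x + (1/2 : ℝ) * y = (x + y) / 2 := by ring
  rw [hmid] at h
  have hGx := Real.Gamma_pos_of_pos hx
  have hGy := Real.Gamma_pos_of_pos hy
  have hGm := Real.Gamma_pos_of_pos (by positivity : (0:ℝ) < (x + y) / 2)
  have h2 : Real.log (Gamma ((x + y) / 2) ^ 2) ≤ Real.log (Gamma x * Gamma y) := by
    rw [Real.log_pow, Real.log_mul hGx.ne' hGy.ne']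
    push_cast
    linarith
  exact (Real.log_le_log_iff (by positivity) (by positivity)).mp h2

/-- The covariance multiplier of the alternative multivariate t-distribution is no larger
than that of the classical multivariate t-distribution with the same degrees of freedom:
for `ν > 2`, `ν Γ((ν-1)/2)² / (2 Γ(ν/2)²) ≤ ν/(ν-2)`. -/
theorem alternative_t_multiplier_le_classical {ν : ℝ} (hν : 2 < ν) :
    ν * Real.Gamma ((ν - 1) / 2) ^ 2 / (2 * Real.Gamma (ν / 2) ^ 2) ≤ ν / (ν - 2) := by
  have hx : (0:ℝ) < (ν - 2) / 2 := by linarith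
  have hy : (0:ℝ) < ν / 2 := by linarith
  have key := gamma_sq_le_mul hx hy
  have hmid : ((ν - 2) / 2 + ν / 2) / 2 = (ν - 1) / 2 := by ring
  rw [hmid] at key
  have hGam : Gamma (ν / 2) = (ν - 2) / 2 * Gamma ((ν - 2) / 2) := by
    have := Real.Gamma_add_one (s := (ν - 2) / 2) hx.ne'
    rw [show (ν - 2) / 2 + 1 = ν / 2 by ring] at this
    exact this
  have hGy := Real.Gamma_pos_of_pos hy
  have hGx := Real.Gamma_pos_of_pos hx
  rw [div_le_div_iff₀ (by positivity) (by linarith)]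
  calc ν * Gamma ((ν - 1) / 2) ^ 2 * (ν - 2)
      ≤ ν * (Gamma ((ν - 2) / 2) * Gamma (ν / 2)) * (ν - 2) := by
        have hν0 : (0:ℝ) < ν := by linarith
        have := mul_le_mul_of_nonneg_right (mul_le_mul_of_nonneg_left key hν0.le) (by linarith : (0:ℝ) ≤ ν - 2)
        linarith
    _ = ν * (2 * Gamma (ν / 2) ^ 2) := by rw [hGam]; ring
end

section
/- Let γ ≤ 0 and 0 < δ < 1 be real numbers. Then for all t ≥ 0, exp(−(1−δ)t − 2γ√t) ≤ exp(γ²/(1−δ)), and equality is attained at t = γ²/(1−δ)². Consequently, the smallest constant M such that t·e^{−t−2γ√t} ≤ M · δ² t e^{−δt} for all t ≥ 0 is M = δ^{−2} e^{γ²/(1−δ)}; i.e., the Gamma(2, δ) density, suitably scaled, dominates the unnormalized target density t ↦ t e^{−t−2γ√t} of the rejection sampler. -/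
open Real

/-- For `γ ≤ 0` and `0 < δ < 1`: the bound `exp(-(1-δ)t - 2γ√t) ≤ exp(γ²/(1-δ))` holds for
all `t ≥ 0`, with equality at `t = γ²/(1-δ)²`; consequently
`M = δ⁻² exp(γ²/(1-δ))` is the smallest constant such that
`t e^{-t-2γ√t} ≤ M · δ² t e^{-δt}` for all `t ≥ 0`. -/
theorem rejection_sampler_envelope {γ δ : ℝ} (hγ : γ ≤ 0) (hδ0 : 0 < δ) (hδ1 : δ < 1) :
    (∀ t : ℝ, 0 ≤ t →
        Real.exp (-(1 - δ) * t - 2 * γ * Real.sqrt t) ≤ Real.exp (γ ^ 2 / (1 - δ))) ∧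
    (Real.exp (-(1 - δ) * (γ ^ 2 / (1 - δ) ^ 2)
        - 2 * γ * Real.sqrt (γ ^ 2 / (1 - δ) ^ 2)) = Real.exp (γ ^ 2 / (1 - δ))) ∧
    IsLeast {M : ℝ | ∀ t : ℝ, 0 ≤ t →
        t * Real.exp (-t - 2 * γ * Real.sqrt t) ≤ M * (δ ^ 2 * t * Real.exp (-δ * t))}
      (δ⁻¹ ^ 2 * Real.exp (γ ^ 2 / (1 - δ))) := by
  have hc : (0:ℝ) < 1 - δ := by linarith
  -- key exponent bound
  have key : ∀ t : ℝ, 0 ≤ t →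
      -(1 - δ) * t - 2 * γ * Real.sqrt t ≤ γ ^ 2 / (1 - δ) := by
    intro t ht
    obtain ⟨s, hs0, rfl⟩ : ∃ s, 0 ≤ s ∧ t = s ^ 2 :=
      ⟨Real.sqrt t, Real.sqrt_nonneg t, (Real.sq_sqrt ht).symm⟩
    rw [Real.sqrt_sq hs0, le_div_iff₀ hc]
    nlinarith [sq_nonneg ((1 - δ) * s + γ)]
  have hsq : Real.sqrt (γ ^ 2 / (1 - δ) ^ 2) = -γ / (1 - δ) := by
    have hform : (-γ / (1 - δ)) ^ 2 = γ ^ 2 / (1 - δ) ^ 2 := by rw [div_pow, neg_sq]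
    rw [← hform, Real.sqrt_sq (div_nonneg (by linarith) hc.le)]
  have heq : -(1 - δ) * (γ ^ 2 / (1 - δ) ^ 2)
      - 2 * γ * Real.sqrt (γ ^ 2 / (1 - δ) ^ 2) = γ ^ 2 / (1 - δ) := by
    have hne : (1:ℝ) - δ ≠ 0 := hc.ne'
    rw [hsq]
    field_simp
    ring
  refine ⟨fun t ht => Real.exp_le_exp.mpr (key t ht), by rw [heq], ?_, ?_⟩
  · -- membership
    intro t ht
    have h1 : Real.exp (-t - 2 * γ * Real.sqrt t)
        = Real.exp (-δ * t) * Real.exp (-(1 - δ) * t - 2 * γ * Real.sqrt t) := by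
      rw [← Real.exp_add]; ring_nf
    have h2 : Real.exp (-(1 - δ) * t - 2 * γ * Real.sqrt t)
        ≤ Real.exp (γ ^ 2 / (1 - δ)) := Real.exp_le_exp.mpr (key t ht)
    have hδ2 : δ⁻¹ ^ 2 * δ ^ 2 = 1 := by field_simp
    calc t * Real.exp (-t - 2 * γ * Real.sqrt t)
        = t * Real.exp (-δ * t) * Real.exp (-(1 - δ) * t - 2 * γ * Real.sqrt t) := by
          rw [h1]; ring
      _ ≤ t * Real.exp (-δ * t) * Real.exp (γ ^ 2 / (1 - δ)) := by
          apply mul_le_mul_of_nonneg_left h2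
          positivity
      _ = δ⁻¹ ^ 2 * Real.exp (γ ^ 2 / (1 - δ)) * (δ ^ 2 * t * Real.exp (-δ * t)) := by
          rw [show δ⁻¹ ^ 2 * Real.exp (γ ^ 2 / (1 - δ)) * (δ ^ 2 * t * Real.exp (-δ * t))
            = (δ⁻¹ ^ 2 * δ ^ 2) * (Real.exp (γ ^ 2 / (1 - δ)) * (t * Real.exp (-δ * t))) by ring,
            hδ2]; ring
  · -- lower bound
    intro M hM
    have hδ2 : δ⁻¹ ^ 2 * δ ^ 2 = 1 := by field_simp
    rcases hγ.lt_or_eq with h | h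
    · set t₀ := γ ^ 2 / (1 - δ) ^ 2 with ht₀def
      have hγ2 : 0 < γ ^ 2 := by nlinarith
      have ht₀ : 0 < t₀ := div_pos hγ2 (by positivity)
      have hMin := hM t₀ ht₀.le
      have hexp : Real.exp (-t₀ - 2 * γ * Real.sqrt t₀)
          = Real.exp (-δ * t₀) * Real.exp (γ ^ 2 / (1 - δ)) := by
        rw [← Real.exp_add, ← heq]; ring_nf
      rw [hexp] at hMin
      have hE : 0 < Real.exp (-δ * t₀) := Real.exp_pos _
      have hK : 0 < Real.exp (γ ^ 2 / (1 - δ)) := Real.exp_pos _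
      have h3 : Real.exp (γ ^ 2 / (1 - δ)) * (t₀ * Real.exp (-δ * t₀))
          ≤ M * δ ^ 2 * (t₀ * Real.exp (-δ * t₀)) := by nlinarith [hMin]
      have hKle := le_of_mul_le_mul_right h3 (mul_pos ht₀ hE)
      calc δ⁻¹ ^ 2 * Real.exp (γ ^ 2 / (1 - δ))
          ≤ δ⁻¹ ^ 2 * (M * δ ^ 2) := by
            exact mul_le_mul_of_nonneg_left hKle (by positivity)
        _ = M := by
            rw [show δ⁻¹ ^ 2 * (M * δ ^ 2) = M * (δ⁻¹ ^ 2 * δ ^ 2) by ring, hδ2, mul_one]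
    · subst h
      simp only [ne_eq, OfNat.ofNat_ne_zero, not_false_eq_true, zero_pow, zero_div,
        Real.exp_zero, mul_one]
      have hev : ∀ t ∈ Set.Ioi (0:ℝ), Real.exp ((δ - 1) * t) ≤ M * δ ^ 2 := by
        intro t ht
        have hMt := hM t (le_of_lt ht)
        simp only [mul_zero, zero_mul, sub_zero] at hMt
        have hE1 : 0 < Real.exp (-t) := Real.exp_pos _
        have hE2 : 0 < Real.exp (-δ * t) := Real.exp_pos _
        have hsplit : Real.exp (-t) = Real.exp ((δ - 1) * t) * Real.exp (-δ * t) := by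
          rw [← Real.exp_add]; ring_nf
        rw [hsplit] at hMt
        have ht' : (0:ℝ) < t := ht
        nlinarith [mul_pos ht' hE2]
      have htend : Filter.Tendsto (fun t : ℝ => Real.exp ((δ - 1) * t))
          (nhdsWithin 0 (Set.Ioi 0)) (nhds 1) := by
        have hcont : Continuous fun t : ℝ => Real.exp ((δ - 1) * t) := by continuity
        have h0 := hcont.tendsto 0
        simpa using h0.mono_left nhdsWithin_le_nhds
      have h1 : (1:ℝ) ≤ M * δ ^ 2 :=
        le_of_tendsto htend (Filter.eventually_of_mem self_mem_nhdsWithin hev)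
      nlinarith [pow_pos hδ0 2]
end

section
/- Let γ < 0 be a real number and define φ : (0,1) → ℝ by φ(δ) = δ^{−2} exp(γ²/(1−δ)). Then the point δ* = 1 + (γ² − √(γ⁴ + 8γ²))/4 lies in the open interval (0,1), and φ attains its global minimum on (0,1) at δ = δ*; that is, φ(δ*) ≤ φ(δ) for all δ ∈ (0,1). -/
private lemma hasDerivAt_phi (c : ℝ) {x : ℝ} (hx0 : x ≠ 0) (hx1 : x ≠ 1) :
    HasDerivAt (fun δ : ℝ => δ⁻¹ ^ 2 * Real.exp (c / (1 - δ)))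
      (Real.exp (c / (1 - x)) * (c * x - 2 * (1 - x) ^ 2) / (x ^ 3 * (1 - x) ^ 2)) x := by
  have h1x : (1 : ℝ) - x ≠ 0 := sub_ne_zero.2 (Ne.symm hx1)
  have hpow : HasDerivAt (fun δ : ℝ => δ⁻¹ ^ 2)
      ((2 : ℕ) * x⁻¹ ^ 1 * (-1 / x ^ 2)) x := by
    have := ((hasDerivAt_id x).inv hx0).pow 2
    exact this.congr_deriv (by simp)
  have hsub : HasDerivAt (fun δ : ℝ => 1 - δ) (-1) x := by
    simpa using (hasDerivAt_id x).const_sub 1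
  have hinv : HasDerivAt (fun δ : ℝ => c / (1 - δ)) (c * (1 / (1 - x) ^ 2)) x := by
    have := (hsub.inv h1x).const_mul c
    simp only [div_eq_mul_inv]
    refine this.congr_deriv ?_
    ring
  have hexp : HasDerivAt (fun δ : ℝ => Real.exp (c / (1 - δ)))
      (Real.exp (c / (1 - x)) * (c * (1 / (1 - x) ^ 2))) x := hinv.exp
  have := hpow.mul hexp
  refine this.congr_deriv ?_
  field_simp
  ring

/-- For `γ < 0`, the function `φ(δ) = δ⁻² exp(γ²/(1-δ))` on `(0,1)` attains its global
minimum at `δ* = 1 + (γ² - √(γ⁴ + 8γ²))/4`, which lies in `(0,1)`. -/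
theorem optimal_rejection_multiplier {γ : ℝ} (hγ : γ < 0) :
    (1 + (γ ^ 2 - Real.sqrt (γ ^ 4 + 8 * γ ^ 2)) / 4) ∈ Set.Ioo (0 : ℝ) 1 ∧
    ∀ δ ∈ Set.Ioo (0 : ℝ) 1,
      (1 + (γ ^ 2 - Real.sqrt (γ ^ 4 + 8 * γ ^ 2)) / 4)⁻¹ ^ 2 *
          Real.exp (γ ^ 2 / (1 - (1 + (γ ^ 2 - Real.sqrt (γ ^ 4 + 8 * γ ^ 2)) / 4)))
        ≤ δ⁻¹ ^ 2 * Real.exp (γ ^ 2 / (1 - δ)) := by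
  set c : ℝ := γ ^ 2 with hc_def
  have hc : 0 < c := by nlinarith
  set s : ℝ := Real.sqrt (γ ^ 4 + 8 * γ ^ 2) with hs_def
  have hs2 : s ^ 2 = c ^ 2 + 8 * c := by
    rw [hs_def, Real.sq_sqrt (by nlinarith)]
    ring
  have hs0 : 0 ≤ s := Real.sqrt_nonneg _
  have hsc : c < s := by nlinarith
  have hsc4 : s < c + 4 := by nlinarith
  set d : ℝ := 1 + (c - s) / 4 with hd_def
  have hd0 : 0 < d := by rw [hd_def]; linarith
  have hd1 : d < 1 := by rw [hd_def]; linarith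
  have hdIoo : d ∈ Set.Ioo (0 : ℝ) 1 := ⟨hd0, hd1⟩
  refine ⟨hdIoo, ?_⟩
  set F : ℝ → ℝ := fun δ => δ⁻¹ ^ 2 * Real.exp (c / (1 - δ)) with hF
  -- derivative sign
  have hderiv : ∀ x ∈ Set.Ioo (0 : ℝ) 1, deriv F x =
      Real.exp (c / (1 - x)) * (c * x - 2 * (1 - x) ^ 2) / (x ^ 3 * (1 - x) ^ 2) :=
    fun x hx => (hasDerivAt_phi c (ne_of_gt hx.1) (ne_of_lt hx.2)).deriv
  have hcont : ∀ x ∈ Set.Ioo (0 : ℝ) 1, ContinuousAt F x :=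
    fun x hx => (hasDerivAt_phi c (ne_of_gt hx.1) (ne_of_lt hx.2)).continuousAt
  have hanti : StrictAntiOn F (Set.Ioc 0 d) := by
    apply strictAntiOn_of_deriv_neg (convex_Ioc 0 d)
    · exact fun x hx => (hcont x ⟨hx.1, lt_of_le_of_lt hx.2 hd1⟩).continuousWithinAt
    · intro x hx
      rw [interior_Ioc] at hx
      obtain ⟨hx0, hxd⟩ := hx
      have hx1 : x < 1 := lt_trans hxd hd1
      rw [hderiv x ⟨hx0, hx1⟩]
      have hnum : c * x - 2 * (1 - x) ^ 2 < 0 := by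
        have h4 : c + 4 - 4 * x > s := by rw [hd_def] at hxd; linarith
        nlinarith [sq_nonneg (c + 4 - 4 * x)]
      have : (0:ℝ) < x ^ 3 * (1 - x) ^ 2 := mul_pos (pow_pos hx0 3) (pow_pos (by linarith : (0:ℝ) < 1 - x) 2)
      have := Real.exp_pos (c / (1 - x))
      apply div_neg_of_neg_of_pos
      · nlinarith
      · exact mul_pos (pow_pos hx0 3) (pow_pos (by linarith : (0:ℝ) < 1 - x) 2)
  have hmono : StrictMonoOn F (Set.Ico d 1) := by
    apply strictMonoOn_of_deriv_pos (convex_Ico d 1)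
    · exact fun x hx => (hcont x ⟨lt_of_lt_of_le hd0 hx.1, hx.2⟩).continuousWithinAt
    · intro x hx
      rw [interior_Ico] at hx
      obtain ⟨hxd, hx1⟩ := hx
      have hx0 : 0 < x := lt_trans hd0 hxd
      rw [hderiv x ⟨hx0, hx1⟩]
      have hnum : 0 < c * x - 2 * (1 - x) ^ 2 := by
        have h4 : c + 4 - 4 * x < s := by rw [hd_def] at hxd; linarith
        have h4' : 0 < c + 4 - 4 * x := by nlinarith
        nlinarith
      have := Real.exp_pos (c / (1 - x))
      apply div_pos
      · nlinarith
      · exact mul_pos (pow_pos hx0 3) (pow_pos (by linarith : (0:ℝ) < 1 - x) 2)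
  intro δ hδ
  rcases lt_trichotomy δ d with h | h | h
  · have := hanti (Set.mem_Ioc.2 ⟨hδ.1, le_of_lt h⟩) (Set.mem_Ioc.2 ⟨hd0, le_refl d⟩) h
    exact le_of_lt this
  · rw [h]
  · have := hmono (Set.mem_Ico.2 ⟨le_refl d, hd1⟩) (Set.mem_Ico.2 ⟨le_of_lt h, hδ.2⟩) h
    exact le_of_lt this
end

section
/- Let γ ∈ ℝ. Then ∫₀^∞ t · exp(−t − 2γ√t) dt = 1 + γ² − γ(2γ² + 3)√π · exp(γ²) · (1 − Φ(γ√2)), where Φ denotes the cumulative distribution function of the standard normal distribution. That is, the reciprocal of the normalizing constant C(γ) of the density f_γ(t) = C(γ) t exp(−t − 2γ√t) on (0,∞) equals the displayed expression. -/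
open MeasureTheory ProbabilityTheory Real

open Set Filter

lemma gauss_poly_bound (k : ℕ) (u : ℝ) :
    ‖u ^ k * Real.exp (-u ^ 2)‖
      ≤ (k.factorial * Real.exp (1/2)) * Real.exp (-(1/2) * u ^ 2) := by
  rw [norm_mul, norm_pow, Real.norm_eq_abs, Real.norm_eq_abs, abs_of_pos (Real.exp_pos _)]
  have h1 : |u| ^ k ≤ k.factorial * Real.exp |u| := by
    have h := Real.pow_div_factorial_le_exp (x := |u|) (abs_nonneg u) k
    have hk : (0:ℝ) < k.factorial := by positivity
    calc |u| ^ k = (|u| ^ k / k.factorial) * k.factorial := by field_simp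
    _ ≤ Real.exp |u| * k.factorial := by gcongr
    _ = _ := by ring
  calc |u| ^ k * Real.exp (-u ^ 2)
      ≤ (k.factorial * Real.exp |u|) * Real.exp (-u ^ 2) := by gcongr
    _ = k.factorial * Real.exp (|u| + (-u ^ 2)) := by rw [Real.exp_add]; ring
    _ ≤ k.factorial * Real.exp (1/2 + (-(1/2) * u ^ 2)) := by
        have hk : (0:ℝ) ≤ k.factorial := by positivity
        have hle : |u| + (-u ^ 2) ≤ 1/2 + (-(1/2) * u ^ 2) := by
          nlinarith [sq_abs u, sq_nonneg (|u| - 1)]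
        exact mul_le_mul_of_nonneg_left (Real.exp_le_exp.mpr hle) hk
    _ = _ := by rw [Real.exp_add]; ring

lemma gauss_poly_integrable (k : ℕ) :
    Integrable (fun u : ℝ => u ^ k * Real.exp (-u ^ 2)) := by
  refine Integrable.mono'
    ((integrable_exp_neg_mul_sq (by norm_num : (0:ℝ) < 1/2)).const_mul
      (k.factorial * Real.exp (1/2))) ?_ (Filter.Eventually.of_forall (gauss_poly_bound k))
  exact ((measurable_id.pow_const k).mul ((measurable_id.pow_const 2).neg.exp)).aestronglyMeasurable

lemma gauss_poly_tendsto (k : ℕ) :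
    Tendsto (fun u : ℝ => u ^ k * Real.exp (-u ^ 2)) atTop (nhds 0) := by
  apply squeeze_zero_norm (gauss_poly_bound k)
  rw [show (0:ℝ) = (k.factorial * Real.exp (1/2)) * 0 by ring]
  apply Filter.Tendsto.const_mul
  apply Real.tendsto_exp_atBot.comp
  simp_rw [neg_mul]
  apply tendsto_neg_atBot_iff.mpr
  exact (tendsto_pow_atTop (by norm_num)).const_mul_atTop (by norm_num)


lemma hasDerivAt_gauss (x : ℝ) :
    HasDerivAt (fun u : ℝ => Real.exp (-u ^ 2)) (-2 * x * Real.exp (-x ^ 2)) x := by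
  have h := ((hasDerivAt_pow 2 x).neg).exp
  refine h.congr_deriv ?_
  simp only [Pi.neg_apply]
  push_cast
  ring

lemma E1 (γ : ℝ) : ∫ u in Ioi γ, u * Real.exp (-u ^ 2) = Real.exp (-γ ^ 2) / 2 := by
  have hcont : ContinuousWithinAt (fun u : ℝ => -1/2 * Real.exp (-u ^ 2)) (Ici γ) γ :=
    ((continuous_const.mul (((continuous_pow 2).neg).rexp))).continuousWithinAt
  have hderiv : ∀ x ∈ Ioi γ, HasDerivAt (fun u : ℝ => -1/2 * Real.exp (-u ^ 2))
      (x * Real.exp (-x ^ 2)) x := by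
    intro x _
    have h := (hasDerivAt_gauss x).const_mul (-1/2 : ℝ)
    refine h.congr_deriv ?_
    ring
  have hint : IntegrableOn (fun u : ℝ => u * Real.exp (-u ^ 2)) (Ioi γ) := by
    have := (gauss_poly_integrable 1).integrableOn (s := Ioi γ)
    simpa using this
  have htend : Tendsto (fun u : ℝ => -1/2 * Real.exp (-u ^ 2)) atTop (nhds 0) := by
    have := (gauss_poly_tendsto 0).const_mul (-1/2 : ℝ)
    simpa using this
  have h := integral_Ioi_of_hasDerivAt_of_tendsto hcont hderiv hint htend
  rw [h]
  ring

lemma E3 (γ : ℝ) : ∫ u in Ioi γ, u ^ 3 * Real.exp (-u ^ 2)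
    = (γ ^ 2 + 1) / 2 * Real.exp (-γ ^ 2) := by
  have hcont : ContinuousWithinAt (fun u : ℝ => -(u ^ 2 + 1)/2 * Real.exp (-u ^ 2)) (Ici γ) γ :=
    (Continuous.mul (by continuity) (((continuous_pow 2).neg).rexp)).continuousWithinAt
  have hderiv : ∀ x ∈ Ioi γ, HasDerivAt (fun u : ℝ => -(u ^ 2 + 1)/2 * Real.exp (-u ^ 2))
      (x ^ 3 * Real.exp (-x ^ 2)) x := by
    intro x _
    have h1 : HasDerivAt (fun u : ℝ => -(u ^ 2 + 1)/2) (-x) x := by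
      have := ((hasDerivAt_pow 2 x).add_const 1).neg.div_const 2
      refine this.congr_deriv ?_
      push_cast; ring
    have h := h1.mul (hasDerivAt_gauss x)
    refine h.congr_deriv ?_
    ring
  have hint : IntegrableOn (fun u : ℝ => u ^ 3 * Real.exp (-u ^ 2)) (Ioi γ) :=
    (gauss_poly_integrable 3).integrableOn
  have htend : Tendsto (fun u : ℝ => -(u ^ 2 + 1)/2 * Real.exp (-u ^ 2)) atTop (nhds 0) := by
    have h2 := ((gauss_poly_tendsto 2).const_mul (-1/2 : ℝ)).add
      ((gauss_poly_tendsto 0).const_mul (-1/2 : ℝ))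
    simp only [mul_zero, add_zero] at h2
    apply h2.congr
    intro u; simp; ring
  have h := integral_Ioi_of_hasDerivAt_of_tendsto hcont hderiv hint htend
  rw [h]
  ring

lemma E2 (γ : ℝ) : ∫ u in Ioi γ, u ^ 2 * Real.exp (-u ^ 2)
    = γ/2 * Real.exp (-γ ^ 2) + 1/2 * ∫ u in Ioi γ, Real.exp (-u ^ 2) := by
  have hcont : ContinuousWithinAt (fun u : ℝ => -u/2 * Real.exp (-u ^ 2)) (Ici γ) γ :=
    (Continuous.mul (by continuity) (((continuous_pow 2).neg).rexp)).continuousWithinAt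
  have hderiv : ∀ x ∈ Ioi γ, HasDerivAt (fun u : ℝ => -u/2 * Real.exp (-u ^ 2))
      (x ^ 2 * Real.exp (-x ^ 2) - 1/2 * Real.exp (-x ^ 2)) x := by
    intro x _
    have h1 : HasDerivAt (fun u : ℝ => -u/2) (-1/2 : ℝ) x := by
      simpa using (hasDerivAt_id x).neg.div_const 2
    have h := h1.mul (hasDerivAt_gauss x)
    refine h.congr_deriv ?_
    ring
  have hint2 : IntegrableOn (fun u : ℝ => u ^ 2 * Real.exp (-u ^ 2)) (Ioi γ) :=
    (gauss_poly_integrable 2).integrableOn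
  have hint0 : IntegrableOn (fun u : ℝ => Real.exp (-u ^ 2)) (Ioi γ) := by
    have := (gauss_poly_integrable 0).integrableOn (s := Ioi γ)
    simpa using this
  have hint : IntegrableOn
      (fun u : ℝ => u ^ 2 * Real.exp (-u ^ 2) - 1/2 * Real.exp (-u ^ 2)) (Ioi γ) :=
    hint2.sub (hint0.const_mul _)
  have htend : Tendsto (fun u : ℝ => -u/2 * Real.exp (-u ^ 2)) atTop (nhds 0) := by
    have := (gauss_poly_tendsto 1).const_mul (-1/2 : ℝ)
    simp only [mul_zero] at this
    apply this.congr
    intro u; simp; ring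
  have h := integral_Ioi_of_hasDerivAt_of_tendsto hcont hderiv hint htend
  rw [integral_sub hint2 (hint0.const_mul _), integral_const_mul] at h
  have := congrArg (fun z => z + 1/2 * ∫ u in Ioi γ, Real.exp (-u ^ 2)) h
  simp only [sub_add_cancel] at this
  rw [this]
  ring


lemma gauss_cdf_compl (γ : ℝ) :
    (1 : ℝ) - ((gaussianReal 0 1) (Set.Iic (γ * Real.sqrt 2))).toReal
      = (∫ u in Ioi γ, Real.exp (-u ^ 2)) / Real.sqrt π := by
  set a := γ * Real.sqrt 2 with ha
  have hpdf : ∀ x : ℝ, gaussianPDFReal 0 1 x = (Real.sqrt (2 * π))⁻¹ * Real.exp (-x ^ 2 / 2) := by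
    intro x
    simp [gaussianPDFReal]
  rw [gaussianReal_apply_eq_integral 0 one_ne_zero,
    ENNReal.toReal_ofReal (integral_nonneg fun x => gaussianPDFReal_nonneg 0 1 x)]
  have hsplit : (∫ x in Iic a, gaussianPDFReal 0 1 x) + (∫ x in Ioi a, gaussianPDFReal 0 1 x)
      = 1 := by
    rw [intervalIntegral.integral_Iic_add_Ioi (integrable_gaussianPDFReal 0 1).integrableOn
      (integrable_gaussianPDFReal 0 1).integrableOn]
    exact integral_gaussianPDFReal_eq_one 0 one_ne_zero
  have h1 : (1 : ℝ) - ∫ x in Iic a, gaussianPDFReal 0 1 x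
      = ∫ x in Ioi a, gaussianPDFReal 0 1 x := by linarith
  rw [h1]
  have h2 : ∫ x in Ioi a, gaussianPDFReal 0 1 x
      = (Real.sqrt (2 * π))⁻¹ * ∫ x in Ioi a, Real.exp (-x ^ 2 / 2) := by
    simp_rw [hpdf]
    rw [integral_const_mul]
  rw [h2]
  have hsqrt2 : (0 : ℝ) < Real.sqrt 2 := Real.sqrt_pos.mpr (by norm_num)
  have h3 := integral_comp_mul_left_Ioi (fun x => Real.exp (-x ^ 2 / 2)) γ hsqrt2
  have h4 : ∀ x : ℝ, Real.exp (-(Real.sqrt 2 * x) ^ 2 / 2) = Real.exp (-x ^ 2) := by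
    intro x
    rw [mul_pow, Real.sq_sqrt (by norm_num : (0:ℝ) ≤ 2)]
    ring_nf
  simp_rw [h4, smul_eq_mul] at h3
  have h5 : ∫ x in Ioi a, Real.exp (-x ^ 2 / 2)
      = Real.sqrt 2 * ∫ u in Ioi γ, Real.exp (-u ^ 2) := by
    rw [ha, mul_comm γ (Real.sqrt 2), h3]
    field_simp
  rw [h5, Real.sqrt_mul (by norm_num : (0:ℝ) ≤ 2) π]
  have hπ : Real.sqrt π ≠ 0 := ne_of_gt (Real.sqrt_pos.mpr Real.pi_pos)
  field_simp

/-- The reciprocal of the normalizing constant of the density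
`f_γ(t) = C(γ) t exp(-t - 2γ√t)` on `(0,∞)`:
`∫₀^∞ t e^{-t-2γ√t} dt = 1 + γ² - γ(2γ²+3)√π e^{γ²}(1 - Φ(γ√2))`, where `Φ` is the
standard normal cumulative distribution function. -/
theorem normalizing_constant_gibbs_density (γ : ℝ) :
    ∫ t in Set.Ioi (0 : ℝ), t * Real.exp (-t - 2 * γ * Real.sqrt t)
      = 1 + γ ^ 2 -
        γ * (2 * γ ^ 2 + 3) * Real.sqrt π * Real.exp (γ ^ 2) *
          (1 - ((gaussianReal 0 1) (Set.Iic (γ * Real.sqrt 2))).toReal) := by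
  -- Step 1: substitution t = s^2
  have hderiv : ∀ x ∈ Ioi (0:ℝ), HasDerivWithinAt (fun s : ℝ => s ^ 2) (2 * x) (Ioi 0) x := by
    intro x _
    have := (hasDerivAt_pow 2 x).hasDerivWithinAt (s := Ioi 0)
    simpa using this
  have hinj : InjOn (fun s : ℝ => s ^ 2) (Ioi 0) :=
    (pow_left_strictMonoOn₀ two_ne_zero).injOn.mono (fun x hx => le_of_lt hx)
  have himg : (fun s : ℝ => s ^ 2) '' Ioi 0 = Ioi 0 := by
    ext x
    constructor
    · rintro ⟨y, hy, rfl⟩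
      exact pow_pos (mem_Ioi.mp hy) 2
    · intro hx
      exact ⟨Real.sqrt x, Real.sqrt_pos.mpr hx, Real.sq_sqrt (le_of_lt hx)⟩
  have hA := integral_image_eq_integral_abs_deriv_smul measurableSet_Ioi hderiv hinj
    (fun t => t * Real.exp (-t - 2 * γ * Real.sqrt t))
  rw [himg] at hA
  rw [hA]
  -- Step 2: rewrite integrand
  have hB : ∫ s in Ioi (0:ℝ), |2 * s| • ((fun t => t * Real.exp (-t - 2 * γ * Real.sqrt t)) (s ^ 2))
      = ∫ s in Ioi (0:ℝ), 2 * Real.exp (γ ^ 2) * (s ^ 3 * Real.exp (-(s + γ) ^ 2)) := by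
    apply setIntegral_congr_fun measurableSet_Ioi
    intro s hs
    have hs' : (0:ℝ) < s := hs
    simp only [smul_eq_mul]
    rw [Real.sqrt_sq hs'.le, abs_of_pos (by linarith),
      show -s ^ 2 - 2 * γ * s = γ ^ 2 + (-(s + γ) ^ 2) by ring, Real.exp_add]
    ring
  rw [hB, integral_const_mul]
  -- Step 3: shift s = u - γ
  have hderiv2 : ∀ x ∈ Ioi γ, HasDerivWithinAt (fun u : ℝ => u - γ) (1:ℝ) (Ioi γ) x := by
    intro x _
    exact ((hasDerivAt_id x).sub_const γ).hasDerivWithinAt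
  have hinj2 : InjOn (fun u : ℝ => u - γ) (Ioi γ) := fun a _ b _ h => by
    simpa using congrArg (fun z => z + γ) h
  have himg2 : (fun u : ℝ => u - γ) '' Ioi γ = Ioi 0 := by
    simp_rw [sub_eq_add_neg]
    rw [image_add_const_Ioi]
    simp
  have hC := integral_image_eq_integral_abs_deriv_smul measurableSet_Ioi hderiv2 hinj2
    (fun s => s ^ 3 * Real.exp (-(s + γ) ^ 2))
  rw [himg2] at hC
  have hC' : ∫ s in Ioi (0:ℝ), s ^ 3 * Real.exp (-(s + γ) ^ 2)
      = ∫ u in Ioi γ, (u - γ) ^ 3 * Real.exp (-u ^ 2) := by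
    rw [hC]
    apply setIntegral_congr_fun measurableSet_Ioi
    intro u _
    simp only [smul_eq_mul, abs_one, one_mul, sub_add_cancel]
  rw [hC']
  -- Step 4: expand and split
  have hexpand : ∀ u : ℝ, (u - γ) ^ 3 * Real.exp (-u ^ 2)
      = u ^ 3 * Real.exp (-u ^ 2) - 3 * γ * (u ^ 2 * Real.exp (-u ^ 2))
        + 3 * γ ^ 2 * (u * Real.exp (-u ^ 2)) - γ ^ 3 * Real.exp (-u ^ 2) := by
    intro u; ring
  simp_rw [hexpand]
  have i3 : IntegrableOn (fun u : ℝ => u ^ 3 * Real.exp (-u ^ 2)) (Ioi γ) :=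
    (gauss_poly_integrable 3).integrableOn
  have i2 : IntegrableOn (fun u : ℝ => u ^ 2 * Real.exp (-u ^ 2)) (Ioi γ) :=
    (gauss_poly_integrable 2).integrableOn
  have i1 : IntegrableOn (fun u : ℝ => u * Real.exp (-u ^ 2)) (Ioi γ) := by
    have := (gauss_poly_integrable 1).integrableOn (s := Ioi γ)
    simpa using this
  have i0 : IntegrableOn (fun u : ℝ => Real.exp (-u ^ 2)) (Ioi γ) := by
    have := (gauss_poly_integrable 0).integrableOn (s := Ioi γ)
    simpa using this
  have iB : IntegrableOn (fun u : ℝ => u ^ 3 * Real.exp (-u ^ 2)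
      - 3 * γ * (u ^ 2 * Real.exp (-u ^ 2))) (Ioi γ) := by
    exact i3.sub (i2.const_mul _)
  have iC : IntegrableOn (fun u : ℝ => u ^ 3 * Real.exp (-u ^ 2)
      - 3 * γ * (u ^ 2 * Real.exp (-u ^ 2)) + 3 * γ ^ 2 * (u * Real.exp (-u ^ 2))) (Ioi γ) := by
    exact iB.add (i1.const_mul _)
  have iD : IntegrableOn (fun u : ℝ => γ ^ 3 * Real.exp (-u ^ 2)) (Ioi γ) := i0.const_mul _
  have iE : IntegrableOn (fun u : ℝ => 3 * γ * (u ^ 2 * Real.exp (-u ^ 2))) (Ioi γ) :=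
    i2.const_mul _
  have iF : IntegrableOn (fun u : ℝ => 3 * γ ^ 2 * (u * Real.exp (-u ^ 2))) (Ioi γ) :=
    i1.const_mul _
  rw [integral_sub iC iD, integral_add iB iF, integral_sub i3 iE,
    integral_const_mul, integral_const_mul, integral_const_mul,
    E1, E2, E3, gauss_cdf_compl]
  set E := ∫ u in Ioi γ, Real.exp (-u ^ 2) with hE
  have hexp : Real.exp (γ ^ 2) * Real.exp (-γ ^ 2) = 1 := by
    rw [← Real.exp_add]; simp
  have hπ : Real.sqrt π ≠ 0 := ne_of_gt (Real.sqrt_pos.mpr Real.pi_pos)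
  field_simp
  linear_combination (γ ^ 2 + 1) * hexp
end

section
/- Let p ≥ 1 be an integer, ν > 0, Ψ a p×p positive definite real matrix, and μ ∈ ℝ^p. Let X ~ N_p(0, Ψ), let τ ~ Gamma(ν/2, ν/2) be independent of X, and set Y = μ + X/√τ. Then the conditional expectation of τ given Y satisfies E[τ | σ(Y)] = (ν + p)/(ν + δ_Y(μ, Ψ)) almost surely, where δ_Y(μ, Ψ) = (Y − μ)ᵀ Ψ^{-1} (Y − μ). -/
open MeasureTheory Matrix ProbabilityTheory
open Real Set

/-- The density of the multivariate normal distribution `N_p(0, Σ)` on `ℝ^p`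
(with respect to Lebesgue measure), for a positive definite covariance matrix `Σ`. -/
noncomputable def mvnPDF {p : ℕ} (S : Matrix (Fin p) (Fin p) ℝ) (x : Fin p → ℝ) : ℝ :=
  (2 * Real.pi) ^ (-(p : ℝ) / 2) * S.det ^ (-(1 : ℝ) / 2) *
    Real.exp (-(x ⬝ᵥ (S⁻¹ *ᵥ x)) / 2)

lemma continuous_quad {p : ℕ} (S : Matrix (Fin p) (Fin p) ℝ) :
    Continuous (fun x : Fin p → ℝ => x ⬝ᵥ (S *ᵥ x)) := by
  unfold dotProduct mulVec
  refine continuous_finset_sum _ (fun i _ => ?_)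
  refine (continuous_apply i).mul ?_
  unfold dotProduct
  exact continuous_finset_sum _ (fun j _ => continuous_const.mul (continuous_apply j))

lemma continuous_mvnPDF {p : ℕ} (S : Matrix (Fin p) (Fin p) ℝ) :
    Continuous (mvnPDF S) := by
  unfold mvnPDF
  exact continuous_const.mul (Real.continuous_exp.comp
    (((continuous_quad (S⁻¹)).neg).div_const 2))

open scoped ENNReal

lemma INNER {p : ℕ} (Ψ : Matrix (Fin p) (Fin p) ℝ) (μ : Fin p → ℝ)
    (w : (Fin p → ℝ) → ℝ≥0∞) (hw : Measurable w) {c : ℝ} (hc : 0 < c) :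
    ∫⁻ x, w (fun i => μ i + x i / c) * ENNReal.ofReal (mvnPDF Ψ x) ∂volume
      = ENNReal.ofReal (c ^ p) *
        ∫⁻ y, w y * ENNReal.ofReal (mvnPDF Ψ (c • (y - μ))) ∂volume := by
  set H : (Fin p → ℝ) → ℝ≥0∞ :=
    fun x => w (fun i => μ i + x i / c) * ENNReal.ofReal (mvnPDF Ψ x) with hH
  set Φ : (Fin p → ℝ) → ℝ≥0∞ :=
    fun z => w z * ENNReal.ofReal (mvnPDF Ψ (c • (z - μ))) with hΦ
  have hHm : Measurable H := by
    apply Measurable.mul ?_ ((continuous_mvnPDF Ψ).measurable.ennreal_ofReal)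
    apply hw.comp
    exact measurable_pi_lambda _
      (fun i => measurable_const.add (by fun_prop))
  have hmap : Measure.map (fun x : Fin p → ℝ => c • x) volume
      = ENNReal.ofReal |(c ^ (Module.finrank ℝ (Fin p → ℝ)))⁻¹| • volume :=
    Measure.map_addHaar_smul volume hc.ne'
  have hfr : Module.finrank ℝ (Fin p → ℝ) = p := Module.finrank_fin_fun ℝ
  have h1 : ∫⁻ x, H (c • x) ∂volume = ENNReal.ofReal ((c ^ p)⁻¹) * ∫⁻ x, H x ∂volume := by
    rw [← lintegral_map hHm (measurable_const_smul c), hmap, lintegral_smul_measure]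
    congr 2
    rw [hfr, abs_of_pos (by positivity)]
  have h2 : ∀ x, H (c • x) = Φ (μ + x) := by
    intro x
    simp only [hH, hΦ]
    congr 2
    · funext i
      simp only [Pi.smul_apply, smul_eq_mul, Pi.add_apply]
      rw [mul_div_cancel_left₀ _ hc.ne']
    · congr 1
      simp
  have h3 : ∫⁻ x, H (c • x) ∂volume = ∫⁻ y, Φ y ∂volume := by
    rw [lintegral_congr h2]
    exact lintegral_add_left_eq_self Φ μ
  rw [← h3, h1, ← mul_assoc, ← ENNReal.ofReal_mul (by positivity),
    mul_inv_cancel₀ (by positivity), ENNReal.ofReal_one, one_mul]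

lemma mvnPDF_nonneg {p : ℕ} {Ψ : Matrix (Fin p) (Fin p) ℝ} (hΨ : Ψ.PosDef) (x : Fin p → ℝ) :
    0 ≤ mvnPDF Ψ x := by
  have h1 : (0:ℝ) < (2 * Real.pi) ^ (-(p : ℝ) / 2) :=
    Real.rpow_pos_of_pos (by positivity) _
  have h2 : (0:ℝ) < Ψ.det ^ (-(1 : ℝ) / 2) := Real.rpow_pos_of_pos hΨ.det_pos _
  unfold mvnPDF
  positivity

lemma KEY {p : ℕ} {ν : ℝ} (hν : 0 < ν)
    (Ψ : Matrix (Fin p) (Fin p) ℝ) (hΨ : Ψ.PosDef)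
    {Ω : Type*} [MeasurableSpace Ω] (P : Measure Ω) [IsProbabilityMeasure P]
    (X : Ω → Fin p → ℝ) (τ : Ω → ℝ) (hX : Measurable X) (hτ : Measurable τ)
    (hXlaw : Measure.map X P =
      volume.withDensity (fun x => ENNReal.ofReal (mvnPDF Ψ x)))
    (hτlaw : Measure.map τ P = gammaMeasure (ν / 2) (ν / 2))
    (hindep : ProbabilityTheory.IndepFun X τ P)
    (μ : Fin p → ℝ)
    (w : (Fin p → ℝ) → ℝ≥0∞) (hw : Measurable w) (hw' : ∀ y, w y ≠ ⊤)
    (e : ℝ → ℝ≥0∞) (he : Measurable e) (he' : ∀ t, e t ≠ ⊤) :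
    ∫⁻ ω, w (fun i => μ i + X ω i / Real.sqrt (τ ω)) * e (τ ω) ∂P
      = ∫⁻ y, w y * ∫⁻ t in Set.Ioi (0:ℝ),
          ENNReal.ofReal ((Real.sqrt t)^p * mvnPDF Ψ (Real.sqrt t • (y - μ)) *
            gammaPDFReal (ν/2) (ν/2) t) * e t ∂volume ∂volume := by
  haveI : SFinite (gammaMeasure (ν/2) (ν/2)) := by unfold gammaMeasure; infer_instance
  have hmvn : Measurable fun x => ENNReal.ofReal (mvnPDF Ψ x) :=
    (continuous_mvnPDF Ψ).measurable.ennreal_ofReal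
  have hgpdf : Measurable (gammaPDF (ν/2) (ν/2)) :=
    (measurable_gammaPDFReal _ _).ennreal_ofReal
  set ρ : Measure (Fin p → ℝ) :=
    volume.withDensity (fun x => ENNReal.ofReal (mvnPDF Ψ x)) with hρ
  set G : (Fin p → ℝ) × ℝ → ℝ≥0∞ :=
    fun z => w (fun i => μ i + z.1 i / Real.sqrt z.2) * e z.2 with hG
  have hGm : Measurable G := by
    apply Measurable.mul
    · apply hw.comp
      refine measurable_pi_lambda _ (fun i => measurable_const.add ?_)
      exact ((measurable_pi_apply i).comp measurable_fst).div
        (Real.continuous_sqrt.measurable.comp measurable_snd)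
    · exact he.comp measurable_snd
  have step1 : ∫⁻ ω, w (fun i => μ i + X ω i / Real.sqrt (τ ω)) * e (τ ω) ∂P
      = ∫⁻ z, G z ∂(ρ.prod (gammaMeasure (ν/2) (ν/2))) := by
    rw [← hXlaw, ← hτlaw,
      ← (indepFun_iff_map_prod_eq_prod_map_map hX.aemeasurable hτ.aemeasurable).mp hindep,
      lintegral_map hGm (hX.prodMk hτ)]
  have step2 : ∫⁻ z, G z ∂(ρ.prod (gammaMeasure (ν/2) (ν/2)))
      = ∫⁻ t, gammaPDF (ν/2) (ν/2) t * ∫⁻ x, G (x, t) ∂ρ ∂volume := by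
    rw [lintegral_prod_symm' _ hGm]
    rw [gammaMeasure, lintegral_withDensity_eq_lintegral_mul _ hgpdf]
    · rfl
    · exact Measurable.lintegral_prod_left (f := fun x t => G (x, t)) hGm
  set κ : ℝ → ℝ≥0∞ := fun t => gammaPDF (ν/2) (ν/2) t * ∫⁻ x, G (x, t) ∂ρ with hκ
  have step3 : ∫⁻ t, κ t ∂volume = ∫⁻ t in Set.Ioi (0:ℝ), κ t ∂volume := by
    have hIio : ∫⁻ t in Set.Iio (0:ℝ), κ t ∂volume = 0 := by
      rw [setLIntegral_congr_fun measurableSet_Iio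
        (fun t (ht : t < 0) => by
          show κ t = 0
          rw [hκ]; simp only; rw [gammaPDF_of_neg ht, zero_mul])]
      exact lintegral_zero
    rw [← lintegral_add_compl κ measurableSet_Iio, hIio, zero_add, compl_Iio,
      ← restrict_Ioi_eq_restrict_Ici]
  -- pointwise evaluation of κ for t > 0
  have step4 : ∀ t : ℝ, 0 < t → κ t
      = ∫⁻ y, (gammaPDF (ν/2) (ν/2) t * e t * ENNReal.ofReal ((Real.sqrt t) ^ p)) *
          (w y * ENNReal.ofReal (mvnPDF Ψ (Real.sqrt t • (y - μ)))) ∂volume := by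
    intro t ht
    have hst : 0 < Real.sqrt t := Real.sqrt_pos.mpr ht
    have hGt : Measurable fun x : Fin p → ℝ => G (x, t) :=
      hGm.comp (measurable_id.prodMk measurable_const)
    have e1 : ∫⁻ x, G (x, t) ∂ρ
        = ∫⁻ x, (w (fun i => μ i + x i / Real.sqrt t) * ENNReal.ofReal (mvnPDF Ψ x)) * e t
            ∂volume := by
      rw [hρ, lintegral_withDensity_eq_lintegral_mul _ hmvn hGt]
      refine lintegral_congr (fun x => ?_)
      simp only [hG, Pi.mul_apply]
      ring
    have e2 : ∫⁻ x, (w (fun i => μ i + x i / Real.sqrt t) * ENNReal.ofReal (mvnPDF Ψ x)) * e t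
          ∂volume
        = (ENNReal.ofReal ((Real.sqrt t) ^ p) *
            ∫⁻ y, w y * ENNReal.ofReal (mvnPDF Ψ (Real.sqrt t • (y - μ))) ∂volume) * e t := by
      rw [lintegral_mul_const' _ _ (he' t), INNER Ψ μ w hw hst]
    rw [hκ]
    simp only
    rw [e1, e2, lintegral_const_mul' (gammaPDF (ν/2) (ν/2) t * e t *
        ENNReal.ofReal ((Real.sqrt t) ^ p)) _
      (ENNReal.mul_ne_top (ENNReal.mul_ne_top ENNReal.ofReal_ne_top (he' t))
        ENNReal.ofReal_ne_top)]
    ring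
  have step5 : ∫⁻ t in Set.Ioi (0:ℝ), κ t ∂volume
      = ∫⁻ t in Set.Ioi (0:ℝ), ∫⁻ y,
          (gammaPDF (ν/2) (ν/2) t * e t * ENNReal.ofReal ((Real.sqrt t) ^ p)) *
          (w y * ENNReal.ofReal (mvnPDF Ψ (Real.sqrt t • (y - μ)))) ∂volume ∂volume :=
    setLIntegral_congr_fun measurableSet_Ioi (fun t ht => step4 t ht)
  have hΛm : Measurable (Function.uncurry fun (t : ℝ) (y : Fin p → ℝ) =>
      (gammaPDF (ν/2) (ν/2) t * e t * ENNReal.ofReal ((Real.sqrt t) ^ p)) *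
      (w y * ENNReal.ofReal (mvnPDF Ψ (Real.sqrt t • (y - μ))))) := by
    apply Measurable.mul
    · apply Measurable.mul
      · exact ((hgpdf.comp measurable_fst).mul (he.comp measurable_fst))
      · exact ((Real.continuous_sqrt.measurable.comp measurable_fst).pow_const p).ennreal_ofReal
    · apply Measurable.mul (hw.comp measurable_snd)
      apply Measurable.ennreal_ofReal
      apply (continuous_mvnPDF Ψ).measurable.comp
      apply Measurable.smul (f := fun x : ℝ × (Fin p → ℝ) => Real.sqrt x.1) (g := fun x => x.2 - μ)
      · exact Real.continuous_sqrt.measurable.comp measurable_fst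
      · exact (measurable_snd.sub measurable_const)
  have step6 : ∫⁻ t in Set.Ioi (0:ℝ), ∫⁻ y,
        (gammaPDF (ν/2) (ν/2) t * e t * ENNReal.ofReal ((Real.sqrt t) ^ p)) *
        (w y * ENNReal.ofReal (mvnPDF Ψ (Real.sqrt t • (y - μ)))) ∂volume ∂volume
      = ∫⁻ y, ∫⁻ t in Set.Ioi (0:ℝ),
        (gammaPDF (ν/2) (ν/2) t * e t * ENNReal.ofReal ((Real.sqrt t) ^ p)) *
        (w y * ENNReal.ofReal (mvnPDF Ψ (Real.sqrt t • (y - μ)))) ∂volume ∂volume :=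
    lintegral_lintegral_swap hΛm.aemeasurable
  have step7 : ∀ y : Fin p → ℝ, (∫⁻ t in Set.Ioi (0:ℝ),
        (gammaPDF (ν/2) (ν/2) t * e t * ENNReal.ofReal ((Real.sqrt t) ^ p)) *
        (w y * ENNReal.ofReal (mvnPDF Ψ (Real.sqrt t • (y - μ)))) ∂volume)
      = w y * ∫⁻ t in Set.Ioi (0:ℝ),
          ENNReal.ofReal ((Real.sqrt t)^p * mvnPDF Ψ (Real.sqrt t • (y - μ)) *
            gammaPDFReal (ν/2) (ν/2) t) * e t ∂volume := by
    intro y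
    rw [← lintegral_const_mul' _ _ (hw' y)]
    refine setLIntegral_congr_fun measurableSet_Ioi (fun t ht => ?_)
    have ht0 : (0:ℝ) < t := ht
    rw [show gammaPDF (ν/2) (ν/2) t = ENNReal.ofReal (gammaPDFReal (ν/2) (ν/2) t) from rfl,
      ENNReal.ofReal_mul (mul_nonneg (pow_nonneg (Real.sqrt_nonneg t) p) (mvnPDF_nonneg hΨ _)),
      ENNReal.ofReal_mul (pow_nonneg (Real.sqrt_nonneg t) p)]
    ring
  rw [step1, step2, step3, step5, step6]
  exact lintegral_congr step7
lemma gammaInt {a b : ℝ} (ha : 0 < a) (hb : 0 < b) :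
    ∫⁻ t in Set.Ioi (0:ℝ), ENNReal.ofReal (t ^ (a-1) * Real.exp (-(b * t))) =
      ENNReal.ofReal (Real.Gamma a / b ^ a) := by
  have hint : IntegrableOn (fun t : ℝ => t ^ (a-1) * Real.exp (-(b * t))) (Set.Ioi 0) := by
    have := integrableOn_rpow_mul_exp_neg_mul_rpow (p := 1) (s := a - 1) (b := b)
      (by linarith) one_pos hb
    refine this.congr_fun (fun x hx => ?_) measurableSet_Ioi
    beta_reduce
    rw [Real.rpow_one, neg_mul]
  rw [← ofReal_integral_eq_lintegral_ofReal hint ?_]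
  · rw [integral_rpow_mul_exp_neg_mul_Ioi ha hb]
    congr 1
    rw [Real.div_rpow zero_le_one hb.le, Real.one_rpow, div_mul_eq_mul_div, one_mul]
  · filter_upwards [ae_restrict_mem measurableSet_Ioi] with x hx
    have : (0:ℝ) < x := hx
    positivity

lemma PW {p : ℕ} {ν q K : ℝ} (hν : 0 < ν) (hq : 0 ≤ q) (hK : 0 ≤ K) :
    (∫⁻ t in Set.Ioi (0:ℝ),
      ENNReal.ofReal ((Real.sqrt t)^p * (K * Real.exp (-(t * q)/2)) *
        gammaPDFReal (ν/2) (ν/2) t) * ENNReal.ofReal t)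
    = ENNReal.ofReal ((ν + p)/(ν + q)) * ∫⁻ t in Set.Ioi (0:ℝ),
      ENNReal.ofReal ((Real.sqrt t)^p * (K * Real.exp (-(t * q)/2)) *
        gammaPDFReal (ν/2) (ν/2) t) := by
  set c0 : ℝ := (ν/2) ^ (ν/2) / Real.Gamma (ν/2) with hc0
  have hc0nn : 0 ≤ c0 := by
    have := Real.Gamma_pos_of_pos (by linarith : 0 < ν/2)
    positivity
  set CC : ℝ := K * c0 with hCC
  have hCCnn : 0 ≤ CC := mul_nonneg hK hc0nn
  set A : ℝ := (ν + p)/2 with hA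
  set B : ℝ := (ν + q)/2 with hB
  have hA0 : 0 < A := by have : (0:ℝ) ≤ p := Nat.cast_nonneg p; rw [hA]; linarith
  have hB0 : 0 < B := by rw [hB]; linarith
  have key : ∀ t ∈ Set.Ioi (0:ℝ),
      (Real.sqrt t)^p * (K * Real.exp (-(t * q)/2)) * gammaPDFReal (ν/2) (ν/2) t
        = CC * (t ^ (A - 1) * Real.exp (-(B * t))) := by
    intro t ht
    have ht0 : (0:ℝ) < t := ht
    rw [gammaPDFReal, if_pos ht0.le]
    have hsq : (Real.sqrt t)^p = t ^ ((p:ℝ)/2) := by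
      rw [Real.sqrt_eq_rpow, ← Real.rpow_natCast (t ^ ((1:ℝ)/2)) p, ← Real.rpow_mul ht0.le]
      ring_nf
    have h1 : t ^ ((p:ℝ)/2) * t ^ (ν/2 - 1) = t ^ (A - 1) := by
      rw [← Real.rpow_add ht0]; congr 1; rw [hA]; ring
    have h2 : Real.exp (-(t*q)/2) * Real.exp (-(ν/2*t)) = Real.exp (-(B*t)) := by
      rw [← Real.exp_add]; congr 1; rw [hB]; ring
    rw [hsq, hCC, hc0, ← h1, ← h2]; ring
  have lhs_eq : (∫⁻ t in Set.Ioi (0:ℝ),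
      ENNReal.ofReal ((Real.sqrt t)^p * (K * Real.exp (-(t * q)/2)) *
        gammaPDFReal (ν/2) (ν/2) t) * ENNReal.ofReal t)
      = ∫⁻ t in Set.Ioi (0:ℝ), ENNReal.ofReal CC *
          ENNReal.ofReal (t ^ (A + 1 - 1) * Real.exp (-(B * t))) := by
    refine setLIntegral_congr_fun measurableSet_Ioi (fun t ht => ?_)
    have ht0 : (0:ℝ) < t := ht
    rw [key t ht, ENNReal.ofReal_mul hCCnn, mul_assoc, ← ENNReal.ofReal_mul (by positivity)]
    congr 2
    rw [show A + 1 - 1 = (A - 1) + 1 by ring, Real.rpow_add_one ht0.ne']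
    ring
  have rhs_eq : (∫⁻ t in Set.Ioi (0:ℝ),
      ENNReal.ofReal ((Real.sqrt t)^p * (K * Real.exp (-(t * q)/2)) *
        gammaPDFReal (ν/2) (ν/2) t))
      = ∫⁻ t in Set.Ioi (0:ℝ), ENNReal.ofReal CC *
          ENNReal.ofReal (t ^ (A - 1) * Real.exp (-(B * t))) := by
    refine setLIntegral_congr_fun measurableSet_Ioi (fun t ht => ?_)
    rw [key t ht, ENNReal.ofReal_mul hCCnn]
  have hGpos := Real.Gamma_pos_of_pos hA0
  have hBApos : (0:ℝ) < B ^ A := Real.rpow_pos_of_pos hB0 A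
  rw [lhs_eq, rhs_eq, lintegral_const_mul' _ _ ENNReal.ofReal_ne_top,
    lintegral_const_mul' _ _ ENNReal.ofReal_ne_top, gammaInt (by linarith) hB0,
    gammaInt hA0 hB0, ← ENNReal.ofReal_mul hCCnn, ← ENNReal.ofReal_mul (by positivity),
    ← ENNReal.ofReal_mul (by positivity)]
  congr 1
  have hGA : Real.Gamma (A + 1) = A * Real.Gamma A := Real.Gamma_add_one hA0.ne'
  have hBA : B ^ (A + 1) = B ^ A * B := by rw [Real.rpow_add_one hB0.ne']
  have hfrac : (ν + (p:ℝ)) / (ν + q) = A / B := by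
    rw [hA, hB]; field_simp
  rw [hGA, hBA, hfrac]
  field_simp

/-- E-step of the EM algorithm for the classical multivariate t-distribution:
if `X ~ N_p(0, Ψ)`, `τ ~ Gamma(ν/2, ν/2)` is independent of `X`, and `Y = μ + X/√τ`,
then `E[τ | σ(Y)] = (ν + p)/(ν + δ_Y(μ, Ψ))` a.s., where
`δ_Y(μ, Ψ) = (Y-μ)ᵀ Ψ⁻¹ (Y-μ)`. -/
theorem condexp_tau_given_Y
    {p : ℕ} (hp : 1 ≤ p) {ν : ℝ} (hν : 0 < ν)
    (Ψ : Matrix (Fin p) (Fin p) ℝ) (hΨ : Ψ.PosDef)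
    {Ω : Type*} [MeasurableSpace Ω] (P : Measure Ω) [IsProbabilityMeasure P]
    (X : Ω → Fin p → ℝ) (τ : Ω → ℝ) (hX : Measurable X) (hτ : Measurable τ)
    (hXlaw : Measure.map X P =
      volume.withDensity (fun x => ENNReal.ofReal (mvnPDF Ψ x)))
    (hτlaw : Measure.map τ P = gammaMeasure (ν / 2) (ν / 2))
    (hτpos : ∀ ω, 0 < τ ω)
    (hindep : ProbabilityTheory.IndepFun X τ P)
    (μ : Fin p → ℝ) (Y : Ω → Fin p → ℝ)
    (hY : ∀ ω i, Y ω i = μ i + X ω i / Real.sqrt (τ ω)) :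
    P[τ | MeasurableSpace.comap Y inferInstance]
      =ᵐ[P] fun ω => (ν + p) / (ν + (Y ω - μ) ⬝ᵥ (Ψ⁻¹ *ᵥ (Y ω - μ))) := by
  -- notation
  set q : (Fin p → ℝ) → ℝ := fun y => (y - μ) ⬝ᵥ (Ψ⁻¹ *ᵥ (y - μ)) with hqdef
  set g : (Fin p → ℝ) → ℝ := fun y => (ν + p) / (ν + q y) with hgdef
  have hq0 : ∀ y, 0 ≤ q y := by
    intro y
    have h := (hΨ.inv.posSemidef).dotProduct_mulVec_nonneg (y - μ)
    rwa [star_trivial] at h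
  have hqcont : Continuous q := by
    have : Continuous fun v : Fin p → ℝ => v ⬝ᵥ (Ψ⁻¹ *ᵥ v) := continuous_quad Ψ⁻¹
    exact this.comp (continuous_id.sub continuous_const)
  have hgcont : Continuous g := by
    apply continuous_const.div (continuous_const.add hqcont)
    intro y
    have := hq0 y
    exact (by linarith : (0:ℝ) < ν + q y).ne'
  have hgnonneg : ∀ y, 0 ≤ g y := by
    intro y
    have h1 : (0:ℝ) ≤ p := Nat.cast_nonneg p
    have := hq0 y
    rw [hgdef]
    positivity
  have hgbdd : ∀ y, g y ≤ (ν + p) / ν := by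
    intro y
    apply div_le_div_of_nonneg_left (by have : (0:ℝ) ≤ p := Nat.cast_nonneg p; linarith) hν
    have := hq0 y; linarith
  have hYfun : Y = fun ω => fun i => μ i + X ω i / Real.sqrt (τ ω) := by
    funext ω; exact funext (hY ω)
  have hYm : Measurable Y := by
    rw [hYfun]
    refine measurable_pi_lambda _ (fun i => measurable_const.add ?_)
    exact ((measurable_pi_apply i).comp hX).div (Real.continuous_sqrt.measurable.comp hτ)
  have hm : MeasurableSpace.comap Y inferInstance ≤ (inferInstance : MeasurableSpace Ω) :=
    hYm.comap_le
  haveI : SigmaFinite (P.trim hm) := by infer_instance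
  -- Integrability of τ
  have hτint : Integrable τ P := by
    refine ⟨hτ.aestronglyMeasurable, ?_⟩
    rw [hasFiniteIntegral_iff_ofReal (ae_of_all _ (fun ω => (hτpos ω).le))]
    have h1 : ∫⁻ ω, ENNReal.ofReal (τ ω) ∂P = ∫⁻ t, ENNReal.ofReal t ∂(Measure.map τ P) :=
      (lintegral_map ENNReal.measurable_ofReal hτ).symm
    have hgpdfm : Measurable (gammaPDF (ν/2) (ν/2)) :=
      (measurable_gammaPDFReal _ _).ennreal_ofReal
    rw [h1, hτlaw, gammaMeasure,
      lintegral_withDensity_eq_lintegral_mul _ hgpdfm ENNReal.measurable_ofReal]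
    have h2 : ∫⁻ t, (gammaPDF (ν/2) (ν/2) * fun t => ENNReal.ofReal t) t ∂volume
        = ∫⁻ t in Set.Ioi (0:ℝ), (gammaPDF (ν/2) (ν/2) * fun t => ENNReal.ofReal t) t
          ∂volume := by
      rw [← lintegral_add_compl _ (measurableSet_Iio (a := (0:ℝ)))]
      have : ∫⁻ t in Set.Iio (0:ℝ), (gammaPDF (ν/2) (ν/2) * fun t => ENNReal.ofReal t) t
          ∂volume = 0 := by
        rw [setLIntegral_congr_fun measurableSet_Iio
          (fun t (ht : t < 0) => by
            show gammaPDF (ν/2) (ν/2) t * ENNReal.ofReal t = 0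
            rw [gammaPDF_of_neg ht, zero_mul])]
        exact lintegral_zero
      rw [this, zero_add, compl_Iio, ← restrict_Ioi_eq_restrict_Ici]
    rw [h2]
    have hc0 : (0:ℝ) ≤ (ν/2) ^ (ν/2) / Real.Gamma (ν/2) := by
      have := Real.Gamma_pos_of_pos (by linarith : 0 < ν/2)
      positivity
    have h3 : ∫⁻ t in Set.Ioi (0:ℝ), (gammaPDF (ν/2) (ν/2) * fun t => ENNReal.ofReal t) t
        ∂volume = ENNReal.ofReal ((ν/2) ^ (ν/2) / Real.Gamma (ν/2)) *
          ∫⁻ t in Set.Ioi (0:ℝ),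
            ENNReal.ofReal (t ^ (ν/2 + 1 - 1) * Real.exp (-(ν/2 * t))) ∂volume := by
      rw [← lintegral_const_mul' _ _ ENNReal.ofReal_ne_top]
      refine setLIntegral_congr_fun measurableSet_Ioi (fun t ht => ?_)
      have ht0 : (0:ℝ) < t := ht
      show gammaPDF (ν/2) (ν/2) t * ENNReal.ofReal t = _
      rw [gammaPDF_eq, if_pos ht0.le, ← ENNReal.ofReal_mul (by positivity),
        ← ENNReal.ofReal_mul hc0]
      congr 1
      rw [show ν/2 + 1 - 1 = (ν/2 - 1) + 1 by ring, Real.rpow_add_one ht0.ne']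
      ring
    rw [h3, gammaInt (by linarith) (by linarith)]
    exact ENNReal.mul_lt_top ENNReal.ofReal_lt_top ENNReal.ofReal_lt_top
  -- Integrability of g ∘ Y
  have hgYint : Integrable (fun ω => g (Y ω)) P := by
    refine Integrable.mono' (integrable_const ((ν + p) / ν)) ?_ ?_
    · exact (hgcont.measurable.comp hYm).aestronglyMeasurable
    · refine ae_of_all _ (fun ω => ?_)
      rw [Real.norm_eq_abs, abs_of_nonneg (hgnonneg _)]
      exact hgbdd _
  -- the key set-integral identity
  have hlint : ∀ B : Set (Fin p → ℝ), MeasurableSet B →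
      ∫⁻ ω in Y ⁻¹' B, ENNReal.ofReal (g (Y ω)) ∂P
        = ∫⁻ ω in Y ⁻¹' B, ENNReal.ofReal (τ ω) ∂P := by
    intro B hB
    set K : ℝ := (2 * Real.pi) ^ (-(p : ℝ) / 2) * Ψ.det ^ (-(1 : ℝ) / 2) with hK
    have hKnn : 0 ≤ K := by
      have h1 : (0:ℝ) < (2 * Real.pi) ^ (-(p : ℝ) / 2) :=
        Real.rpow_pos_of_pos (by positivity) _
      have h2 : (0:ℝ) < Ψ.det ^ (-(1 : ℝ) / 2) := Real.rpow_pos_of_pos hΨ.det_pos _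
      positivity
    have hmvn_eq : ∀ t : ℝ, 0 < t → ∀ y,
        mvnPDF Ψ (Real.sqrt t • (y - μ)) = K * Real.exp (-(t * q y)/2) := by
      intro t ht y
      have hdot : (Real.sqrt t • (y - μ)) ⬝ᵥ (Ψ⁻¹ *ᵥ (Real.sqrt t • (y - μ)))
          = t * q y := by
        rw [Matrix.mulVec_smul, dotProduct_smul, smul_dotProduct,
          smul_eq_mul, smul_eq_mul, ← mul_assoc, Real.mul_self_sqrt ht.le]
      show K * Real.exp (-((Real.sqrt t • (y - μ)) ⬝ᵥ (Ψ⁻¹ *ᵥ (Real.sqrt t • (y - μ))))/2)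
        = K * Real.exp (-(t * q y)/2)
      rw [hdot]
    -- LHS via KEY
    have hLHS : ∫⁻ ω in Y ⁻¹' B, ENNReal.ofReal (g (Y ω)) ∂P
        = ∫⁻ y, B.indicator (fun y => ENNReal.ofReal (g y)) y *
            ∫⁻ t in Set.Ioi (0:ℝ),
              ENNReal.ofReal ((Real.sqrt t)^p * mvnPDF Ψ (Real.sqrt t • (y - μ)) *
                gammaPDFReal (ν/2) (ν/2) t) * (1 : ℝ≥0∞) ∂volume ∂volume := by
      rw [← lintegral_indicator (hYm hB)]
      have : ∀ ω, (Y ⁻¹' B).indicator (fun ω => ENNReal.ofReal (g (Y ω))) ω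
          = B.indicator (fun y => ENNReal.ofReal (g y)) (fun i => μ i + X ω i /
              Real.sqrt (τ ω)) * (1 : ℝ≥0∞) := by
        intro ω
        rw [mul_one]
        have hY' : Y ω = fun i => μ i + X ω i / Real.sqrt (τ ω) := funext (hY ω)
        rw [← hY']
        by_cases hωB : Y ω ∈ B
        · rw [Set.indicator_of_mem (Set.mem_preimage.mpr hωB), Set.indicator_of_mem hωB]
        · rw [Set.indicator_of_notMem (fun h => hωB (Set.mem_preimage.mp h)),
            Set.indicator_of_notMem hωB]
      rw [lintegral_congr this]
      exact KEY hν Ψ hΨ P X τ hX hτ hXlaw hτlaw hindep μ _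
        ((hgcont.measurable.ennreal_ofReal).indicator hB)
        (fun y => by
          by_cases h : y ∈ B
          · rw [Set.indicator_of_mem h]; exact ENNReal.ofReal_ne_top
          · rw [Set.indicator_of_notMem h]; exact ENNReal.zero_ne_top)
        1 measurable_const (fun t => ENNReal.one_ne_top)
    -- RHS via KEY
    have hRHS : ∫⁻ ω in Y ⁻¹' B, ENNReal.ofReal (τ ω) ∂P
        = ∫⁻ y, B.indicator (1 : (Fin p → ℝ) → ℝ≥0∞) y *
            ∫⁻ t in Set.Ioi (0:ℝ),
              ENNReal.ofReal ((Real.sqrt t)^p * mvnPDF Ψ (Real.sqrt t • (y - μ)) *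
                gammaPDFReal (ν/2) (ν/2) t) * ENNReal.ofReal t ∂volume ∂volume := by
      rw [← lintegral_indicator (hYm hB)]
      have : ∀ ω, (Y ⁻¹' B).indicator (fun ω => ENNReal.ofReal (τ ω)) ω
          = B.indicator (1 : (Fin p → ℝ) → ℝ≥0∞) (fun i => μ i + X ω i /
              Real.sqrt (τ ω)) * ENNReal.ofReal (τ ω) := by
        intro ω
        have hY' : Y ω = fun i => μ i + X ω i / Real.sqrt (τ ω) := funext (hY ω)
        rw [← hY']
        by_cases hωB : Y ω ∈ B
        · rw [Set.indicator_of_mem (Set.mem_preimage.mpr hωB), Set.indicator_of_mem hωB,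
            Pi.one_apply, one_mul]
        · rw [Set.indicator_of_notMem (fun h => hωB (Set.mem_preimage.mp h)),
            Set.indicator_of_notMem hωB, zero_mul]
      rw [lintegral_congr this]
      exact KEY hν Ψ hΨ P X τ hX hτ hXlaw hτlaw hindep μ _
        (measurable_one.indicator hB)
        (fun y => by
          by_cases h : y ∈ B
          · rw [Set.indicator_of_mem h]; exact ENNReal.one_ne_top
          · rw [Set.indicator_of_notMem h]; exact ENNReal.zero_ne_top)
        _ ENNReal.measurable_ofReal (fun t => ENNReal.ofReal_ne_top)
    rw [hLHS, hRHS]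
    refine lintegral_congr (fun y => ?_)
    by_cases hyB : y ∈ B
    · rw [Set.indicator_of_mem hyB, Set.indicator_of_mem hyB, Pi.one_apply, one_mul]
      -- pointwise gamma computation
      have hcongr : ∫⁻ t in Set.Ioi (0:ℝ),
          ENNReal.ofReal ((Real.sqrt t)^p * mvnPDF Ψ (Real.sqrt t • (y - μ)) *
            gammaPDFReal (ν/2) (ν/2) t) * (1:ℝ≥0∞) ∂volume
          = ∫⁻ t in Set.Ioi (0:ℝ),
          ENNReal.ofReal ((Real.sqrt t)^p * (K * Real.exp (-(t * q y)/2)) *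
            gammaPDFReal (ν/2) (ν/2) t) ∂volume := by
        refine setLIntegral_congr_fun measurableSet_Ioi (fun t ht => ?_)
        rw [mul_one, hmvn_eq t ht y]
      have hcongr2 : ∫⁻ t in Set.Ioi (0:ℝ),
          ENNReal.ofReal ((Real.sqrt t)^p * mvnPDF Ψ (Real.sqrt t • (y - μ)) *
            gammaPDFReal (ν/2) (ν/2) t) * ENNReal.ofReal t ∂volume
          = ∫⁻ t in Set.Ioi (0:ℝ),
          ENNReal.ofReal ((Real.sqrt t)^p * (K * Real.exp (-(t * q y)/2)) *
            gammaPDFReal (ν/2) (ν/2) t) * ENNReal.ofReal t ∂volume := by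
        refine setLIntegral_congr_fun measurableSet_Ioi (fun t ht => ?_)
        rw [hmvn_eq t ht y]
      rw [hcongr, hcongr2, PW hν (hq0 y) hKnn]
    · rw [Set.indicator_of_notMem hyB, Set.indicator_of_notMem hyB, zero_mul, zero_mul]
  -- set-integral equality in Bochner form
  have hgeq : ∀ s : Set Ω, MeasurableSet[MeasurableSpace.comap Y inferInstance] s →
      P s < ⊤ → ∫ ω in s, g (Y ω) ∂P = ∫ ω in s, τ ω ∂P := by
    rintro s ⟨B, hB, rfl⟩ _
    have h1 : ∫ ω in Y ⁻¹' B, g (Y ω) ∂P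
        = (∫⁻ ω in Y ⁻¹' B, ENNReal.ofReal (g (Y ω)) ∂P).toReal := by
      rw [integral_eq_lintegral_of_nonneg_ae (ae_of_all _ (fun ω => hgnonneg (Y ω)))
        ((hgcont.measurable.comp hYm).aestronglyMeasurable)]
    have h2 : ∫ ω in Y ⁻¹' B, τ ω ∂P
        = (∫⁻ ω in Y ⁻¹' B, ENNReal.ofReal (τ ω) ∂P).toReal := by
      rw [integral_eq_lintegral_of_nonneg_ae (ae_of_all _ (fun ω => (hτpos ω).le))
        hτ.aestronglyMeasurable]
    rw [h1, h2, hlint B hB]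
  have hgm : AEStronglyMeasurable[MeasurableSpace.comap Y inferInstance]
      (fun ω => g (Y ω)) P := by
    refine StronglyMeasurable.aestronglyMeasurable ?_
    refine Measurable.stronglyMeasurable ?_
    exact hgcont.measurable.comp (Measurable.of_comap_le le_rfl)
  have hfinal := ae_eq_condExp_of_forall_setIntegral_eq hm hτint
    (fun s _ _ => (hgYint.integrableOn : IntegrableOn (fun ω => g (Y ω)) s P))
    hgeq hgm
  exact hfinal.symm
end
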